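/- Let r = p/q ∈ R_{m,n} be nondegenerate with normalized coefficient vector, S = S(q,-p). If r̃ = p̃/q̃ ∈ R_{m,n} satisfies √(2(m+n+1))·d(r,r̃)·κ(S) ≤ 1/3, then r̃ is also nondegenerate and its Sylvester-like matrix S̃ = S(q̃,-p̃) satisfies κ(S̃) ≤ 2·κ(S). -/

import Mathlib

noncomputable section
open Matrix Finset Polynomial

/-- Spectral (operator `ℓ² → ℓ²`) norm of a complex matrix. -/
def specNorm {α β : Type} [Fintype α] [Fintype β] [DecidableEq α] [DecidableEq β]
    (A : Matrix α β ℂ) : ℝ :=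
  ‖(Matrix.toEuclideanLin A).toContinuousLinearMap‖

/-- Moore–Penrose pseudoinverse `A† = Aᴴ (A Aᴴ)⁻¹` of a full row rank matrix. -/
def pinv {α β : Type} [Fintype α] [Fintype β] [DecidableEq α] [DecidableEq β]
    (A : Matrix α β ℂ) : Matrix β α ℂ :=
  Aᴴ * (A * Aᴴ)⁻¹

/-- Sylvester-like matrix `S = S(q,-p)` of size `(m+n+1) × (m+n+2)`: for `0 ≤ k ≤ m` the
`(j,k)` entry is `q_{j-k}`, and for `0 ≤ k ≤ n` the `(j, m+1+k)` entry is `-p_{j-k}`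
(coefficients out of range being `0`). -/
def sylv (m n : ℕ) (p q : Polynomial ℂ) : Matrix (Fin (m + n + 1)) (Fin (m + n + 2)) ℂ :=
  fun j k =>
    if (k : ℕ) ≤ m then
      (if (k : ℕ) ≤ (j : ℕ) then q.coeff ((j : ℕ) - (k : ℕ)) else 0)
    else
      (if (k : ℕ) - (m + 1) ≤ (j : ℕ) then -p.coeff ((j : ℕ) - ((k : ℕ) - (m + 1))) else 0)

/-- Spectral condition number `κ(S) = ‖S‖·‖S†‖` of the Sylvester-like matrix. -/
def condS (m n : ℕ) (p q : Polynomial ℂ) : ℝ :=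
  specNorm (sylv m n p q) * specNorm (pinv (sylv m n p q))

/-- Squared Euclidean norm of the stacked coefficient vector of `p/q ∈ R_{m,n}`. -/
def coeffNorm2 (m n : ℕ) (p q : Polynomial ℂ) : ℝ :=
  (∑ j ∈ Finset.range (m + 1), ‖p.coeff j‖ ^ 2)
    + (∑ j ∈ Finset.range (n + 1), ‖q.coeff j‖ ^ 2)

/-- Distance of the stacked coefficient vectors of `p/q` and of `a·(p̃/q̃)` (viewed in
`R_{m,n}`, i.e. in `ℂ^{m+n+2}`). -/
def coeffDist (m n : ℕ) (p q pt qt : Polynomial ℂ) (a : ℂ) : ℝ :=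
  Real.sqrt ((∑ j ∈ Finset.range (m + 1), ‖p.coeff j - a * pt.coeff j‖ ^ 2)
    + (∑ j ∈ Finset.range (n + 1), ‖q.coeff j - a * qt.coeff j‖ ^ 2))

/-!
Write `S̃ = S (1 - E)` with `E = S† (S - S̃)`. The operator norm of `S - S̃ = S(q - q̃, -(p - p̃))`
is at most its Frobenius norm, which is `√(m+n+1) d(r, r̃)`, and since the columns of `S` are
shifted copies of the coefficients of `q` and `-p`, a normalized `r` has `1 ≤ √2 ‖S‖`; hence
`‖E‖ ≤ 1/3`. Then `‖S̃‖ ≤ 4/3 ‖S‖`, and `(1 - E)⁻¹ S†` is a right inverse of `S̃` of norm at most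
`3/2 ‖S†‖`. So `S̃` has full row rank, and as `S̃† S̃` is an orthogonal projection, `S̃†` is no
longer than any right inverse of `S̃`. Full row rank of `S` itself is the Bézout identity:
for coprime `p, q` with `deg p = m` or `deg q = n`, every polynomial of degree `≤ m + n` is
`q A - p B` with `deg A ≤ m`, `deg B ≤ n`.
-/

open scoped Matrix.Norms.L2Operator ComplexOrder

section

variable {m n : Type} [Fintype m] [Fintype n]

theorem Matrix.rank_eq_card_iff_surjective_mulVec {K : Type*} [Field K] (A : Matrix m n K) :
    A.rank = Fintype.card m ↔ Function.Surjective A.mulVec := by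
  rw [rank, ← Module.finrank_fintype_fun_eq_card (R := K), ← coe_mulVecLin,
    ← LinearMap.range_eq_top]
  exact ⟨Submodule.eq_top_of_finrank_eq, fun h => by rw [h, finrank_top]⟩

variable [DecidableEq n]

theorem Matrix.sqrt_sum_sq_col_le_l2_opNorm (A : Matrix m n ℂ) (j : n) :
    √(∑ i, ‖A i j‖ ^ 2) ≤ ‖A‖ := by
  have h := l2_opNorm_mulVec A (PiLp.single 2 j 1)
  rw [PiLp.norm_single, norm_one, mul_one, EuclideanSpace.norm_eq] at h
  simpa [mulVec, dotProduct, PiLp.single_apply] using h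

theorem Matrix.l2_opNorm_one_le : ‖(1 : Matrix n n ℂ)‖ ≤ 1 :=
  IsStarProjection.norm_le _ (.one _)

theorem Matrix.isUnit_det_one_sub (E : Matrix n n ℂ) (hE : ‖E‖ < 1) : IsUnit (1 - E).det :=
  (isUnit_iff_isUnit_det _).mp (Units.oneSub E hE).isUnit

theorem Matrix.l2_opNorm_inv_one_sub_le (E : Matrix n n ℂ) (hE : ‖E‖ < 1) :
    ‖(1 - E)⁻¹‖ ≤ (1 - ‖E‖)⁻¹ := by
  set R := (1 - E)⁻¹
  have hR : R = 1 + E * R :=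
    calc R = (1 - E) * R + E * R := by rw [sub_mul, one_mul, sub_add_cancel]
      _ = 1 + E * R := by rw [mul_nonsing_inv _ (isUnit_det_one_sub E hE)]
  have hRle : ‖R‖ ≤ 1 + ‖E‖ * ‖R‖ :=
    calc ‖R‖ = ‖1 + E * R‖ := congrArg _ hR
      _ ≤ ‖(1 : Matrix n n ℂ)‖ + ‖E * R‖ := norm_add_le _ _
      _ ≤ 1 + ‖E‖ * ‖R‖ := add_le_add l2_opNorm_one_le (l2_opNorm_mul _ _)
  rw [← one_div, le_div_iff₀ (sub_pos.mpr hE)]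
  linarith [mul_sub ‖R‖ 1 ‖E‖]

theorem Matrix.l2_opNorm_le_sqrt_sum_sq (A : Matrix m n ℂ) :
    ‖A‖ ≤ √(∑ i, ∑ j, ‖A i j‖ ^ 2) := by
  rw [l2_opNorm_def]
  refine ContinuousLinearMap.opNorm_le_bound _ (Real.sqrt_nonneg _) fun x => ?_
  rw [← Real.sqrt_sq (norm_nonneg x), ← Real.sqrt_mul' _ (sq_nonneg _),
    ← Real.sqrt_sq (norm_nonneg _)]
  gcongr
  rw [EuclideanSpace.norm_sq_eq, EuclideanSpace.norm_sq_eq, Finset.sum_mul]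
  gcongr with i
  calc _ ≤ (∑ j, ‖A i j‖ * ‖x j‖) ^ 2 := by
        gcongr
        calc ‖∑ j, A i j * x j‖ ≤ ∑ j, ‖A i j * x j‖ := norm_sum_le _ _
          _ = ∑ j, ‖A i j‖ * ‖x j‖ := by simp only [norm_mul]
    _ ≤ _ := Finset.sum_mul_sq_le_sq_mul_sq _ _ _

variable [DecidableEq m]

theorem specNorm_eq_norm (A : Matrix m n ℂ) : specNorm A = ‖A‖ :=
  (Matrix.l2_opNorm_def A).symm

theorem mul_pinv_of_rank_eq (A : Matrix m n ℂ) (hA : A.rank = Fintype.card m) :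
    A * pinv A = 1 := by
  have hunit : IsUnit (A * Aᴴ) := by
    rw [← mulVec_surjective_iff_isUnit, ← rank_eq_card_iff_surjective_mulVec,
      rank_self_mul_conjTranspose, hA]
  rw [pinv, ← Matrix.mul_assoc, mul_nonsing_inv _ ((isUnit_iff_isUnit_det _).mp hunit)]

theorem isStarProjection_pinv_mul (A : Matrix m n ℂ) (hA : A.rank = Fintype.card m) :
    IsStarProjection (pinv A * A) := by
  refine ⟨?_, ?_⟩
  · rw [IsIdempotentElem, Matrix.mul_assoc, ← Matrix.mul_assoc A, mul_pinv_of_rank_eq A hA,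
      Matrix.one_mul]
  · rw [IsSelfAdjoint, star_eq_conjTranspose, pinv, conjTranspose_mul, conjTranspose_mul,
      conjTranspose_nonsing_inv, conjTranspose_mul, conjTranspose_conjTranspose, Matrix.mul_assoc]

theorem norm_pinv_le_of_mul_eq_one (A : Matrix m n ℂ) (X : Matrix n m ℂ) (hX : A * X = 1) :
    ‖pinv A‖ ≤ ‖X‖ := by
  have hA : A.rank = Fintype.card m := (rank_eq_card_iff_surjective_mulVec A).mpr
    (mulVec_surjective_iff_exists_right_inverse.mpr ⟨X, hX⟩)
  calc ‖pinv A‖ = ‖(pinv A * A) * X‖ := by rw [Matrix.mul_assoc, hX, Matrix.mul_one]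
    _ ≤ ‖pinv A * A‖ * ‖X‖ := l2_opNorm_mul _ _
    _ ≤ 1 * ‖X‖ := by gcongr; exact (isStarProjection_pinv_mul A hA).norm_le
    _ = ‖X‖ := one_mul _

theorem rank_eq_card_and_cond_le_of_norm_pinv_mul_norm_sub_le (S T : Matrix m n ℂ)
    (hS : S.rank = Fintype.card m) (hST : ‖pinv S‖ * ‖S - T‖ ≤ 1 / 3) :
    T.rank = Fintype.card m ∧ ‖T‖ * ‖pinv T‖ ≤ 2 * (‖S‖ * ‖pinv S‖) := by
  set E := pinv S * (S - T)
  have hE : ‖E‖ ≤ 1 / 3 := (l2_opNorm_mul _ _).trans hST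
  have hT : S * (1 - E) = T := by
    rw [Matrix.mul_sub, Matrix.mul_one, ← Matrix.mul_assoc, mul_pinv_of_rank_eq S hS,
      Matrix.one_mul, sub_sub_cancel]
  have hX : T * ((1 - E)⁻¹ * pinv S) = 1 := by
    rw [← hT, Matrix.mul_assoc, ← Matrix.mul_assoc (1 - E),
      mul_nonsing_inv _ (isUnit_det_one_sub E (by linarith)),
      Matrix.one_mul, mul_pinv_of_rank_eq S hS]
  refine ⟨(rank_eq_card_iff_surjective_mulVec T).mpr
    (mulVec_surjective_iff_exists_right_inverse.mpr ⟨_, hX⟩), ?_⟩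
  have hnormT : ‖T‖ ≤ 4 / 3 * ‖S‖ :=
    calc ‖T‖ ≤ ‖S‖ * ‖1 - E‖ := hT ▸ l2_opNorm_mul _ _
      _ ≤ ‖S‖ * (1 + 1 / 3) := by
        gcongr
        exact (norm_sub_le _ _).trans (add_le_add l2_opNorm_one_le hE)
      _ = 4 / 3 * ‖S‖ := by ring
  have hnormR : ‖(1 - E)⁻¹‖ ≤ 3 / 2 :=
    (l2_opNorm_inv_one_sub_le E (by linarith)).trans
      (by rw [inv_le_comm₀ (by linarith) (by norm_num)]; linarith)
  have hpinvT : ‖pinv T‖ ≤ 3 / 2 * ‖pinv S‖ :=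
    calc ‖pinv T‖ ≤ ‖(1 - E)⁻¹ * pinv S‖ := norm_pinv_le_of_mul_eq_one T _ hX
      _ ≤ ‖(1 - E)⁻¹‖ * ‖pinv S‖ := l2_opNorm_mul _ _
      _ ≤ 3 / 2 * ‖pinv S‖ := by gcongr
  calc ‖T‖ * ‖pinv T‖ ≤ (4 / 3 * ‖S‖) * (3 / 2 * ‖pinv S‖) := by gcongr
    _ = 2 * (‖S‖ * ‖pinv S‖) := by ring

end

namespace Polynomial

variable {K : Type*} [Field K]

theorem coeff_mul_eq_sum_range (g A : K[X]) {d : ℕ} (hA : A.natDegree ≤ d) (j : ℕ) :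
    (g * A).coeff j = ∑ k ∈ range (d + 1), (if k ≤ j then g.coeff (j - k) else 0) * A.coeff k := by
  set F : ℕ → K := fun k => (if k ≤ j then g.coeff (j - k) else 0) * A.coeff k
  calc (g * A).coeff j = ∑ k ∈ range (j + 1), F k := by
        rw [mul_comm, coeff_mul,
          Finset.Nat.sum_antidiagonal_eq_sum_range_succ fun a b => A.coeff a * g.coeff b]
        exact Finset.sum_congr rfl fun k hk => by
          simp only [F, if_pos (Nat.lt_succ_iff.mp (Finset.mem_range.mp hk)), mul_comm]
    _ = ∑ k ∈ range (j + d + 1), F k :=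
        (Finset.eventually_constant_sum (fun k hk => by simp [F, show ¬k ≤ j by omega])
          (by omega)).symm
    _ = ∑ k ∈ range (d + 1), F k :=
        Finset.eventually_constant_sum
          (fun k hk => by simp [F, coeff_eq_zero_of_natDegree_lt (show A.natDegree < k by omega)])
          (by omega)

theorem exists_mul_sub_mul_eq_of_natDegree_eq {p q f : K[X]} {m n : ℕ} (hp0 : p ≠ 0)
    (hpm : p.natDegree = m) (hq : q.natDegree ≤ n) (hco : IsCoprime p q)
    (hf : f.natDegree ≤ m + n) :
    ∃ A B : K[X], A.natDegree ≤ m ∧ B.natDegree ≤ n ∧ q * A - p * B = f := by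
  obtain ⟨u, v, huv⟩ := hco
  set A := v * f % p
  set B := -(u * f) - q * (v * f / p)
  have hA : A.natDegree ≤ m := by
    have := degree_mod_lt (v * f) hp0
    rw [degree_eq_natDegree hp0, hpm] at this
    exact natDegree_le_iff_degree_le.mpr this.le
  have hAB : q * A - p * B = f := by
    linear_combination q * EuclideanDomain.mod_add_div (v * f) p + f * huv
  refine ⟨A, B, hA, ?_, hAB⟩
  by_cases hB0 : B = 0
  · simp [hB0]
  have hpB : (p * B).natDegree ≤ m + n := by
    rw [show p * B = q * A - f by rw [← hAB]; ring]
    simpa using natDegree_sub_le_of_le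
      ((natDegree_mul_le_of_le hq hA).trans (Nat.add_comm n m).le) hf
  rw [natDegree_mul hp0 hB0, hpm] at hpB
  omega

theorem exists_mul_sub_mul_eq_of_isCoprime {p q f : K[X]} {m n : ℕ} (hp : p.natDegree ≤ m)
    (hq : q.natDegree ≤ n) (hco : IsCoprime p q) (hlead : p.coeff m ≠ 0 ∨ q.coeff n ≠ 0)
    (hf : f.natDegree ≤ m + n) :
    ∃ A B : K[X], A.natDegree ≤ m ∧ B.natDegree ≤ n ∧ q * A - p * B = f := by
  rcases hlead with hl | hl
  · exact exists_mul_sub_mul_eq_of_natDegree_eq (fun h => hl (by simp [h]))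
      (hp.antisymm (le_natDegree_of_ne_zero hl)) hq hco hf
  · obtain ⟨A, B, hA, hB, h⟩ := exists_mul_sub_mul_eq_of_natDegree_eq (fun h => hl (by simp [h]))
      (hq.antisymm (le_natDegree_of_ne_zero hl)) hp hco.symm (by omega : f.natDegree ≤ n + m)
    exact ⟨-B, -A, by rwa [natDegree_neg], by rwa [natDegree_neg], by linear_combination h⟩

theorem sum_range_norm_sq_shift (Q : ℂ[X]) {a d N : ℕ} (hQ : Q.natDegree ≤ d)
    (hN : a + d + 1 ≤ N) :
    ∑ j ∈ range N, ‖if a ≤ j then Q.coeff (j - a) else 0‖ ^ 2 =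
      ∑ i ∈ range (d + 1), ‖Q.coeff i‖ ^ 2 := by
  rw [Finset.eventually_constant_sum (fun j hj => ?_) hN, add_assoc, Finset.sum_range_add,
    Finset.sum_eq_zero fun j hj => ?_, zero_add]
  · exact Finset.sum_congr rfl fun i _ => by
      rw [if_pos (Nat.le_add_right a i), Nat.add_sub_cancel_left]
  · rw [if_neg (by simpa using hj), norm_zero, sq, zero_mul]
  · rw [coeff_eq_zero_of_natDegree_lt (by omega)]
    simp

end Polynomial

section Sylvester

variable {m n : ℕ}

theorem sylv_mulVec (p q A B : ℂ[X]) (hA : A.natDegree ≤ m) (hB : B.natDegree ≤ n) :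
    sylv m n p q *ᵥ
        (fun k : Fin (m + n + 2) => if (k : ℕ) ≤ m then A.coeff k else B.coeff (k - (m + 1))) =
      fun j : Fin (m + n + 1) => (q * A - p * B).coeff j := by
  funext j
  set F : ℕ → ℂ := fun k =>
    (if k ≤ m then (if k ≤ j then q.coeff (j - k) else 0)
      else (if k - (m + 1) ≤ j then -p.coeff (j - (k - (m + 1))) else 0)) *
    (if k ≤ m then A.coeff k else B.coeff (k - (m + 1)))
  have hqA : ∑ k ∈ range (m + 1), F k = (q * A).coeff j := by
    rw [coeff_mul_eq_sum_range q A hA]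
    exact Finset.sum_congr rfl fun k hk => by
      simp only [F, if_pos (Nat.lt_succ_iff.mp (Finset.mem_range.mp hk))]
  have hpB : ∑ k ∈ range (n + 1), F (m + 1 + k) = -(p * B).coeff j := by
    rw [← coeff_neg, ← neg_mul, coeff_mul_eq_sum_range (-p) B hB]
    exact Finset.sum_congr rfl fun k _ => by
      simp only [F, if_neg (by omega : ¬m + 1 + k ≤ m), Nat.add_sub_cancel_left, coeff_neg]
  calc (sylv m n p q *ᵥ _) j = ∑ k ∈ range (m + n + 2), F k := Fin.sum_univ_eq_sum_range F _
    _ = _ := by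
      rw [show m + n + 2 = m + 1 + (n + 1) by omega, Finset.sum_range_add, hqA, hpB, coeff_sub,
        sub_eq_add_neg]

theorem sylv_rank (p q : ℂ[X]) (hp : p.natDegree ≤ m) (hq : q.natDegree ≤ n)
    (hco : IsCoprime p q) (hlead : p.coeff m ≠ 0 ∨ q.coeff n ≠ 0) :
    (sylv m n p q).rank = m + n + 1 := by
  refine ((Matrix.rank_eq_card_iff_surjective_mulVec _).mpr fun w => ?_).trans (Fintype.card_fin _)
  set f := ((degreeLTEquiv ℂ (m + n + 1)).symm w : ℂ[X])
  have hf : f.natDegree ≤ m + n := by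
    have := mem_degreeLT.mp ((degreeLTEquiv ℂ (m + n + 1)).symm w).2
    exact natDegree_le_iff_degree_le.mpr (Order.le_of_lt_succ (by exact_mod_cast this))
  obtain ⟨A, B, hA, hB, hAB⟩ := exists_mul_sub_mul_eq_of_isCoprime hp hq hco hlead hf
  refine ⟨_, (sylv_mulVec p q A B hA hB).trans ?_⟩
  rw [hAB]
  exact (degreeLTEquiv ℂ (m + n + 1)).apply_symm_apply w

theorem sum_norm_sq_sylv_col (P Q : ℂ[X]) (hP : P.natDegree ≤ m) (hQ : Q.natDegree ≤ n)
    (k : Fin (m + n + 2)) :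
    ∑ j, ‖sylv m n P Q j k‖ ^ 2 =
      if (k : ℕ) ≤ m then ∑ i ∈ range (n + 1), ‖Q.coeff i‖ ^ 2
      else ∑ i ∈ range (m + 1), ‖P.coeff i‖ ^ 2 := by
  split_ifs with hk
  · simp only [sylv, if_pos hk]
    rw [Fin.sum_univ_eq_sum_range (fun j => ‖if (k : ℕ) ≤ j then Q.coeff (j - k) else 0‖ ^ 2)]
    exact sum_range_norm_sq_shift Q hQ (by omega)
  · have hneg (j : ℕ) : ‖if (k : ℕ) - (m + 1) ≤ j then -P.coeff (j - (k - (m + 1))) else 0‖ =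
        ‖if (k : ℕ) - (m + 1) ≤ j then P.coeff (j - (k - (m + 1))) else 0‖ := by
      split_ifs <;> simp
    simp only [sylv, if_neg hk, hneg]
    rw [Fin.sum_univ_eq_sum_range
      (fun j => ‖if (k : ℕ) - (m + 1) ≤ j then P.coeff (j - (k - (m + 1))) else 0‖ ^ 2)]
    exact sum_range_norm_sq_shift P hP (by omega)

theorem sum_sum_norm_sq_sylv (P Q : ℂ[X]) (hP : P.natDegree ≤ m) (hQ : Q.natDegree ≤ n) :
    ∑ j, ∑ k, ‖sylv m n P Q j k‖ ^ 2 =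
      (m + 1) * ∑ i ∈ range (n + 1), ‖Q.coeff i‖ ^ 2 +
        (n + 1) * ∑ i ∈ range (m + 1), ‖P.coeff i‖ ^ 2 := by
  rw [Finset.sum_comm]
  simp only [sum_norm_sq_sylv_col P Q hP hQ]
  rw [Fin.sum_univ_eq_sum_range (fun k => if k ≤ m then _ else _),
    show m + n + 2 = m + 1 + (n + 1) by omega, Finset.sum_range_add,
    Finset.sum_congr rfl fun k hk => if_pos (Nat.lt_succ_iff.mp (Finset.mem_range.mp hk)),
    Finset.sum_congr rfl fun k _ => if_neg (by omega : ¬m + 1 + k ≤ m)]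
  simp

theorem norm_sylv_le (P Q : ℂ[X]) (hP : P.natDegree ≤ m) (hQ : Q.natDegree ≤ n) :
    ‖sylv m n P Q‖ ≤ √((m + n + 1) * coeffNorm2 m n P Q) := by
  refine (Matrix.l2_opNorm_le_sqrt_sum_sq _).trans (Real.sqrt_le_sqrt ?_)
  have hP0 : 0 ≤ ∑ i ∈ range (m + 1), ‖P.coeff i‖ ^ 2 := by positivity
  have hQ0 : 0 ≤ ∑ i ∈ range (n + 1), ‖Q.coeff i‖ ^ 2 := by positivity
  rw [sum_sum_norm_sq_sylv P Q hP hQ, coeffNorm2]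
  nlinarith

theorem coeffNorm2_le_two_mul_sq_norm_sylv (P Q : ℂ[X]) (hP : P.natDegree ≤ m)
    (hQ : Q.natDegree ≤ n) : coeffNorm2 m n P Q ≤ 2 * ‖sylv m n P Q‖ ^ 2 := by
  have hcol (k : Fin (m + n + 2)) : ∑ j, ‖sylv m n P Q j k‖ ^ 2 ≤ ‖sylv m n P Q‖ ^ 2 :=
    (Real.sqrt_le_left (norm_nonneg _)).mp (Matrix.sqrt_sum_sq_col_le_l2_opNorm _ k)
  have hQ' := hcol ⟨0, by omega⟩
  have hP' := hcol ⟨m + 1, by omega⟩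
  rw [sum_norm_sq_sylv_col P Q hP hQ] at hQ' hP'
  rw [if_pos (Nat.zero_le m)] at hQ'
  rw [if_neg (by simp)] at hP'
  rw [coeffNorm2]
  linarith

theorem sylv_sub (p q p' q' : ℂ[X]) :
    sylv m n p q - sylv m n p' q' = sylv m n (p - p') (q - q') := by
  ext j k
  simp only [Matrix.sub_apply, sylv]
  split_ifs <;> simp [coeff_sub]; ring

theorem coeffDist_one_eq (p q p' q' : ℂ[X]) :
    coeffDist m n p q p' q' 1 = √(coeffNorm2 m n (p - p') (q - q')) := by
  simp [coeffDist, coeffNorm2, coeff_sub]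

end Sylvester

theorem perturbed_nondegenerate_and_conditioned_general (m n : ℕ) (p q pt qt : Polynomial ℂ)
    (hp : p.natDegree ≤ m) (hq : q.natDegree ≤ n)
    (hpt : pt.natDegree ≤ m) (hqt : qt.natDegree ≤ n)
    (hco : IsCoprime p q) (hlead : p.coeff m ≠ 0 ∨ q.coeff n ≠ 0)
    (hnorm : coeffNorm2 m n p q = 1)
    (hsmall : Real.sqrt (2 * (m + n + 1)) * coeffDist m n p q pt qt 1 * condS m n p q ≤ 1 / 3) :
    (sylv m n pt qt).rank = m + n + 1 ∧ condS m n pt qt ≤ 2 * condS m n p q := by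
  set S := sylv m n p q
  set T := sylv m n pt qt
  have hS : S.rank = Fintype.card (Fin (m + n + 1)) :=
    (sylv_rank p q hp hq hco hlead).trans (Fintype.card_fin _).symm
  have hST : ‖S - T‖ ≤ √(m + n + 1) * coeffDist m n p q pt qt 1 := by
    rw [sylv_sub, coeffDist_one_eq, ← Real.sqrt_mul (by positivity)]
    exact norm_sylv_le _ _ (max_self m ▸ natDegree_sub_le_of_le hp hpt)
      (max_self n ▸ natDegree_sub_le_of_le hq hqt)
  have hS1 : 1 ≤ √2 * ‖S‖ := by
    rw [← Real.sqrt_sq (norm_nonneg S), ← Real.sqrt_mul zero_le_two, Real.one_le_sqrt, ← hnorm]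
    exact coeffNorm2_le_two_mul_sq_norm_sylv p q hp hq
  set d := coeffDist m n p q pt qt 1
  have hd : 0 ≤ d := Real.sqrt_nonneg _
  have hE : ‖pinv S‖ * ‖S - T‖ ≤ 1 / 3 :=
    calc ‖pinv S‖ * ‖S - T‖ ≤ ‖pinv S‖ * (√(m + n + 1) * d) := by gcongr
      _ ≤ (√2 * ‖S‖) * (‖pinv S‖ * (√(m + n + 1) * d)) := le_mul_of_one_le_left (by positivity) hS1
      _ = √(2 * (m + n + 1)) * d * condS m n p q := by
        rw [condS, specNorm_eq_norm, specNorm_eq_norm, Real.sqrt_mul zero_le_two]; ring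
      _ ≤ 1 / 3 := hsmall
  obtain ⟨hT, hcond⟩ := rank_eq_card_and_cond_le_of_norm_pinv_mul_norm_sub_le S T hS hE
  refine ⟨hT.trans (Fintype.card_fin _), ?_⟩
  simpa only [condS, specNorm_eq_norm] using hcond

/-- if `r = p/q` is nondegenerate and normalized and
`√(2(m+n+1)) d(r,r̃) κ(S) ≤ 1/3`, then `r̃` is nondegenerate (its Sylvester-like matrix has
full row rank) and `κ(S̃) ≤ 2 κ(S)`. -/
theorem perturbed_nondegenerate_and_conditioned (m n : ℕ) (p q pt qt : Polynomial ℂ)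
    (hp : p.natDegree ≤ m) (hq : q.natDegree ≤ n)
    (hpt : pt.natDegree ≤ m) (hqt : qt.natDegree ≤ n)
    (hco : IsCoprime p q) (hlead : p.coeff m ≠ 0 ∨ q.coeff n ≠ 0)
    (hnorm : coeffNorm2 m n p q = 1) (hnormt : coeffNorm2 m n pt qt = 1)
    (hopt : ∀ a : ℂ, ‖a‖ = 1 →
      coeffDist m n p q pt qt 1 ≤ coeffDist m n p q pt qt a)
    (hsmall : Real.sqrt (2 * (m + n + 1)) * coeffDist m n p q pt qt 1 * condS m n p q ≤ 1 / 3) :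
    (sylv m n pt qt).rank = m + n + 1 ∧ condS m n pt qt ≤ 2 * condS m n p q :=
  perturbed_nondegenerate_and_conditioned_general m n p q pt qt hp hq hpt hqt hco hlead hnorm hsmall
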